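/- For all n, m ≥ 0, the cardinalities of the pairwise sums of trees add up to a Catalan number: Σ_{x ∈ Y_n, y ∈ Y_m} card(x + y) = c_{n+m}, where c_k = (2k)!/(k!(k+1)!) is the k-th Catalan number. -/

import Mathlib

/-!
The sums `x + y` with `deg x = n` and `deg y = m` partition `Y (n + m)`, so the double sum
counts each tree of degree `n + m` exactly once. The partition is given by an explicit map
`z ↦ splitAt m z = (x, y)`: for `z = l ∨ r`, if `deg r ≥ m` then `l` becomes the left subtree of
`x` and `r` is split further, otherwise `r` becomes the right subtree of `y` and `l` is split
further. Every `z` lies in the sum of its own split. Conversely the map is monotone for the Tamari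
order and sends both ends `x / y` and `x \ y` of the interval `x + y` to `(x, y)`, hence is constant
on it. Antisymmetry of the Tamari order comes from the potential `leftWeight`, which every
rotation strictly lowers.
-/

/-- A planar binary tree: a leaf `|` or a grafting `x ∨ y`. -/
inductive PBT : Type
  | leaf : PBT
  | node : PBT → PBT → PBT
  deriving DecidableEq

namespace PBT

/-- The degree: number of internal vertices. -/
def deg : PBT → ℕ
  | leaf => 0
  | node l r => deg l + deg r + 1

/-- The set `Y n` of planar binary trees of degree `n`. -/
def Y (n : ℕ) : Set PBT := {t | t.deg = n}

/-- The `over` operation `x / y`. -/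
def overT : PBT → PBT → PBT
  | x, leaf => x
  | x, node yl yr => node (overT x yl) yr

/-- The `under` operation `x \ y`. -/
def under : PBT → PBT → PBT
  | leaf, y => y
  | node xl xr, y => node xl (under xr y)

/-- The Tamari order, generated by `(x ∨ y) ∨ z ≤ x ∨ (y ∨ z)` and compatibility
with grafting on both sides. -/
inductive tle : PBT → PBT → Prop
  | refl (x : PBT) : tle x x
  | trans {x y z : PBT} : tle x y → tle y z → tle x z
  | rotate (x y z : PBT) : tle (node (node x y) z) (node x (node y z))
  | node_left {x y : PBT} (z : PBT) : tle x y → tle (node x z) (node y z)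
  | node_right {x y : PBT} (z : PBT) : tle x y → tle (node z x) (node z y)

/-- The sum of two planar binary trees: the Tamari interval `[x/y, x\y]`
(a subset of `Y (deg x + deg y)`). -/
def sum (x y : PBT) : Set PBT := {z | tle (overT x y) z ∧ tle z (under x y)}

/-- A grove of degree `n`: a nonempty subset of `Y n`. -/
def Grove (n : ℕ) (A : Set PBT) : Prop := A.Nonempty ∧ ∀ x ∈ A, x.deg = n

/-- The sum of groves. -/
def gsum (A B : Set PBT) : Set PBT := ⋃ x ∈ A, ⋃ y ∈ B, sum x y

/-- The reflection involution σ. -/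
def σ : PBT → PBT
  | leaf => leaf
  | node l r => node (σ r) (σ l)

/-- The left sum `x ⊣ y` of trees (with the conventions `x ⊣ | = {x}`, `| ⊣ y = {|}`). -/
def lsum : PBT → PBT → Set PBT
  | x, leaf => {x}
  | leaf, _ => {leaf}
  | node xl xr, y => (fun z => node xl z) '' sum xr y

/-- The right sum `x ⊢ y` of trees (with the conventions `| ⊢ y = {y}`, `x ⊢ | = {|}`). -/
def rsum : PBT → PBT → Set PBT
  | leaf, y => {y}
  | _, leaf => {leaf}
  | x, node yl yr => (fun z => node z yr) '' sum x yl

/-- Left sum of groves. -/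
def glsum (A B : Set PBT) : Set PBT := ⋃ x ∈ A, ⋃ y ∈ B, lsum x y

/-- Right sum of groves. -/
def grsum (A B : Set PBT) : Set PBT := ⋃ x ∈ A, ⋃ y ∈ B, rsum x y

/-- Multiplication of a tree by a grove:
`| × B = {|}` and `(xˡ ∨ xʳ) × B = ((xˡ × B) ⊢ B) ⊣ (xʳ × B)`.
(The conventions `{|} ⊢ B = B` and `A ⊣ {|} = A` are built into `rsum`/`lsum`.) -/
def tmul : PBT → Set PBT → Set PBT
  | leaf, _ => {leaf}
  | node l r, B => glsum (grsum (tmul l B) B) (tmul r B)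

/-- Multiplication of groves. -/
def gmul (A B : Set PBT) : Set PBT := ⋃ x ∈ A, tmul x B

end PBT

namespace PBT

lemma deg_overT (x y : PBT) : deg (overT x y) = deg x + deg y := by
  induction y with
  | leaf => rfl
  | node yl yr ihl => simp only [overT, deg, ihl]; omega

lemma deg_under (x y : PBT) : deg (under x y) = deg x + deg y := by
  induction x with
  | leaf => simp [under, deg]
  | node xl xr _ ihr => simp only [under, deg, ihr]; omega

@[simp]
lemma leaf_overT (y : PBT) : overT leaf y = y := by
  induction y with
  | leaf => rfl
  | node yl yr ihl => simp [overT, ihl]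

lemma overT_node_tle (a b c : PBT) : tle (overT (node a b) c) (node a (overT b c)) := by
  induction c with
  | leaf => exact tle.refl _
  | node cl cr ihl => exact (tle.node_left cr ihl).trans (tle.rotate a (overT b cl) cr)

lemma node_under_tle (a b c : PBT) : tle (node (under a b) c) (under a (node b c)) := by
  induction a with
  | leaf => exact tle.refl _
  | node al ar _ ihr => exact (tle.rotate al (under ar b) c).trans (tle.node_right al ihr)

def leftWeight : PBT → ℕ
  | leaf => 0
  | node l r => leftWeight l + leftWeight r + deg l

namespace tle

variable {u v : PBT}

lemma deg_eq (h : tle u v) : deg u = deg v := by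
  induction h with
  | refl => rfl
  | trans _ _ ih₁ ih₂ => exact ih₁.trans ih₂
  | rotate => simp only [deg]; omega
  | node_left _ _ ih => simp only [deg, ih]
  | node_right _ _ ih => simp only [deg, ih]

lemma eq_or_leftWeight_lt (h : tle u v) : u = v ∨ leftWeight v < leftWeight u := by
  induction h with
  | refl => exact .inl rfl
  | trans _ _ ih₁ ih₂ =>
    rcases ih₁ with rfl | ih₁
    · exact ih₂
    · rcases ih₂ with rfl | ih₂
      · exact .inr ih₁
      · exact .inr (ih₂.trans ih₁)
  | rotate => right; simp only [leftWeight, deg]; omega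
  | node_left z h ih =>
    rcases ih with rfl | ih
    · exact .inl rfl
    · right; simp only [leftWeight, h.deg_eq]; omega
  | node_right z _ ih =>
    rcases ih with rfl | ih
    · exact .inl rfl
    · right; simp only [leftWeight]; omega

lemma antisymm (h : tle u v) (h' : tle v u) : u = v := by
  rcases h.eq_or_leftWeight_lt with rfl | hlt
  · rfl
  rcases h'.eq_or_leftWeight_lt with rfl | hlt'
  · rfl
  · omega

end tle

def splitAt : ℕ → PBT → PBT × PBT
  | _, leaf => (leaf, leaf)
  | m, node l r =>
    if m ≤ deg r then (splitAt m r).map (node l) id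
    else (splitAt (m - deg r - 1) l).map id (fun y => node y r)

lemma splitAt_node_of_le {m : ℕ} {l r : PBT} (h : m ≤ deg r) :
    splitAt m (node l r) = (splitAt m r).map (node l) id := if_pos h

lemma splitAt_node_of_lt {m : ℕ} {l r : PBT} (h : deg r < m) :
    splitAt m (node l r) = (splitAt (m - deg r - 1) l).map id (fun y => node y r) :=
  if_neg (Nat.not_le.mpr h)

lemma tle.splitAt_mono {z z' : PBT} (h : tle z z') (m : ℕ) :
    tle (splitAt m z).1 (splitAt m z').1 ∧ tle (splitAt m z).2 (splitAt m z').2 := by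
  induction h generalizing m with
  | refl => exact ⟨.refl _, .refl _⟩
  | trans _ _ ih₁ ih₂ =>
    exact ⟨(ih₁ m).1.trans (ih₂ m).1, (ih₁ m).2.trans (ih₂ m).2⟩
  | rotate a b c =>
    rcases le_or_gt m (deg c) with hc | hc
    · rw [splitAt_node_of_le hc, splitAt_node_of_le (by simp only [deg]; omega),
        splitAt_node_of_le hc]
      exact ⟨.rotate _ _ _, .refl _⟩
    rcases le_or_gt (m - deg c - 1) (deg b) with hb | hb
    · rw [splitAt_node_of_lt hc, splitAt_node_of_le hb,
        splitAt_node_of_le (by simp only [deg]; omega), splitAt_node_of_lt hc]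
      exact ⟨.refl _, .refl _⟩
    · rw [splitAt_node_of_lt hc, splitAt_node_of_lt hb,
        splitAt_node_of_lt (by simp only [deg]; omega),
        show m - deg (node b c) - 1 = m - deg c - 1 - deg b - 1 by simp only [deg]; omega]
      exact ⟨.refl _, .rotate _ _ _⟩
  | node_left z h ih =>
    rcases le_or_gt m (deg z) with hz | hz
    · rw [splitAt_node_of_le hz, splitAt_node_of_le hz]
      exact ⟨.node_left _ h, .refl _⟩
    · rw [splitAt_node_of_lt hz, splitAt_node_of_lt hz]
      exact ⟨(ih _).1, .node_left _ (ih _).2⟩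
  | node_right z h ih =>
    rcases le_or_gt m (deg _) with hx | hx
    · rw [splitAt_node_of_le hx, splitAt_node_of_le (h.deg_eq ▸ hx)]
      exact ⟨.node_right _ (ih m).1, (ih m).2⟩
    · rw [splitAt_node_of_lt hx, splitAt_node_of_lt (h.deg_eq ▸ hx), h.deg_eq]
      exact ⟨.refl _, .node_right _ h⟩

@[simp]
lemma splitAt_zero (x : PBT) : splitAt 0 x = (x, leaf) := by
  induction x with
  | leaf => rfl
  | node l r _ ihr => simp [splitAt_node_of_le (Nat.zero_le (deg r)), ihr]

lemma splitAt_overT (x y : PBT) : splitAt (deg y) (overT x y) = (x, y) := by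
  induction y with
  | leaf => exact splitAt_zero x
  | node yl yr ihl =>
    rw [overT, splitAt_node_of_lt (by simp only [deg]; omega),
      show deg (node yl yr) - deg yr - 1 = deg yl by simp only [deg]; omega, ihl]
    rfl

lemma splitAt_under (x y : PBT) : splitAt (deg y) (under x y) = (x, y) := by
  induction x with
  | leaf => simpa only [under, leaf_overT] using splitAt_overT leaf y
  | node xl xr _ ihr =>
    rw [under, splitAt_node_of_le (by rw [deg_under]; omega), ihr]
    rfl

lemma deg_of_mem_sum {x y z : PBT} (h : z ∈ sum x y) : deg z = deg x + deg y := by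
  rw [← h.1.deg_eq, deg_overT]

lemma splitAt_eq_of_mem_sum {x y z : PBT} (h : z ∈ sum x y) : splitAt (deg y) z = (x, y) := by
  have lower := h.1.splitAt_mono (deg y)
  have upper := h.2.splitAt_mono (deg y)
  rw [splitAt_overT] at lower
  rw [splitAt_under] at upper
  exact Prod.ext (upper.1.antisymm lower.1) (upper.2.antisymm lower.2)

lemma node_mem_sum_node_left {l r x y : PBT} (h : r ∈ sum x y) :
    node l r ∈ sum (node l x) y :=
  ⟨(overT_node_tle l x y).trans (.node_right l h.1), .node_right l h.2⟩

lemma node_mem_sum_node_right {l r x y : PBT} (h : l ∈ sum x y) :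
    node l r ∈ sum x (node y r) :=
  ⟨.node_left r h.1, (tle.node_left r h.2).trans (node_under_tle x y r)⟩

lemma deg_splitAt_snd {m : ℕ} {z : PBT} (h : m ≤ deg z) : deg (splitAt m z).2 = m := by
  induction z generalizing m with
  | leaf => simp_all [deg]
  | node l r ihl ihr =>
    rcases le_or_gt m (deg r) with hr | hr
    · rw [splitAt_node_of_le hr]
      exact ihr hr
    · rw [splitAt_node_of_lt hr]
      simp only [Prod.map_snd, deg] at h ⊢
      rw [ihl (by omega)]
      omega

lemma mem_sum_splitAt {m : ℕ} {z : PBT} (h : m ≤ deg z) :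
    z ∈ sum (splitAt m z).1 (splitAt m z).2 := by
  induction z generalizing m with
  | leaf => exact ⟨.refl _, .refl _⟩
  | node l r ihl ihr =>
    rcases le_or_gt m (deg r) with hr | hr
    · rw [splitAt_node_of_le hr]
      exact node_mem_sum_node_left (ihr hr)
    · rw [splitAt_node_of_lt hr]
      exact node_mem_sum_node_right (ihl (by simp only [deg] at h; omega))

lemma mem_sum_iff {x y z : PBT} :
    z ∈ sum x y ↔ deg z = deg x + deg y ∧ splitAt (deg y) z = (x, y) := by
  refine ⟨fun h => ⟨deg_of_mem_sum h, splitAt_eq_of_mem_sum h⟩, fun ⟨hz, hsplit⟩ => ?_⟩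
  simpa only [hsplit] using mem_sum_splitAt (m := deg y) (z := z) (by omega)

def toTree : PBT → BinaryTree Unit
  | leaf => .nil
  | node l r => .node () (toTree l) (toTree r)

def ofTree : BinaryTree Unit → PBT
  | .nil => leaf
  | .node _ l r => node (ofTree l) (ofTree r)

def equivTree : PBT ≃ BinaryTree Unit where
  toFun := toTree
  invFun := ofTree
  left_inv t := by induction t <;> simp_all [toTree, ofTree]
  right_inv t := by induction t <;> simp_all [toTree, ofTree]

lemma numNodes_toTree (t : PBT) : (toTree t).numNodes = deg t := by
  induction t <;> simp_all [toTree, deg, BinaryTree.numNodes]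

def treesOf (n : ℕ) : Finset PBT :=
  (BinaryTree.treesOfNumNodesEq n).map equivTree.symm.toEmbedding

lemma mem_treesOf {n : ℕ} {t : PBT} : t ∈ treesOf n ↔ deg t = n := by
  simp [treesOf, equivTree, numNodes_toTree]

lemma coe_treesOf (n : ℕ) : (treesOf n : Set PBT) = Y n := by
  ext t
  simp [mem_treesOf, Y]

lemma card_treesOf (n : ℕ) : (treesOf n).card = catalan n := by
  rw [treesOf, Finset.card_map, BinaryTree.treesOfNumNodesEq_card_eq_catalan]

lemma ncard_sum_eq_card_fiber {n m : ℕ} {x y : PBT} (hx : deg x = n) (hy : deg y = m) :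
    (sum x y).ncard = ((treesOf (n + m)).filter (fun z => splitAt m z = (x, y))).card := by
  rw [← Set.ncard_coe_finset]
  congr 1
  ext z
  simp [mem_sum_iff, mem_treesOf, hx, hy]

lemma splitAt_mem_treesOf_product {n m : ℕ} {z : PBT} (hz : z ∈ treesOf (n + m)) :
    splitAt m z ∈ treesOf n ×ˢ treesOf m := by
  rw [mem_treesOf] at hz
  have hm : m ≤ deg z := by omega
  have hdeg := deg_of_mem_sum (mem_sum_splitAt hm)
  rw [deg_splitAt_snd hm] at hdeg
  exact Finset.mem_product.mpr
    ⟨mem_treesOf.mpr (by omega), mem_treesOf.mpr (deg_splitAt_snd hm)⟩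

end PBT

lemma catalan_eq_factorial_div (k : ℕ) :
    catalan k = (2 * k).factorial / (k.factorial * (k + 1).factorial) := by
  have h : (2 * k).factorial = catalan k * (k.factorial * (k + 1).factorial) := by
    rw [← Nat.choose_mul_factorial_mul_factorial (show k ≤ 2 * k by omega),
      show 2 * k - k = k by omega, ← Nat.centralBinom_eq_two_mul_choose,
      ← succ_mul_catalan_eq_centralBinom, Nat.factorial_succ]
    ring
  rw [h, Nat.mul_div_cancel _ (by positivity)]

open PBT in
/-- `Σ_{x ∈ Y_n, y ∈ Y_m} card(x + y) = c_{n+m}` where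
`c_k = (2k)!/(k!(k+1)!)` is the Catalan number. -/
theorem sum_card_sum (n m : ℕ) :
    ∑ᶠ x ∈ Y n, ∑ᶠ y ∈ Y m, (PBT.sum x y).ncard =
      Nat.factorial (2 * (n + m)) /
        (Nat.factorial (n + m) * Nat.factorial (n + m + 1)) := by
  rw [← catalan_eq_factorial_div, ← card_treesOf,
    Finset.card_eq_sum_card_fiberwise fun _ => splitAt_mem_treesOf_product,
    Finset.sum_product]
  simp only [← coe_treesOf, finsum_mem_coe_finset]
  refine Finset.sum_congr rfl fun x hx => Finset.sum_congr rfl fun y hy => ?_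
  exact ncard_sum_eq_card_fiber (mem_treesOf.mp hx) (mem_treesOf.mp hy)
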